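/- Fix integers n ≥ 2 and 1 ≤ d < n, and let 1 ≤ i ≤ d. There exists C > 0 such that for every v ∈ Λ^i ℝ^{d+1} with ‖v‖ = 1 and every r > 0, the d-dimensional Lebesgue measure of the set D^+(v, r) = { s ∈ I^d : ‖π_+(u(s)v)‖ ≤ r } is less than C·r^i. -/

import Mathlib

open Matrix MeasureTheory Filter
open scoped ENNReal NNReal

noncomputable section

/-! ## Exterior powers in coordinates -/

/-- Index set for the standard wedge basis of Λ^k ℝ^m : k-element subsets of {0,…,m−1}. -/
abbrev Idx (m k : ℕ) := {J : Finset (Fin m) // J.card = k}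

/-- Model for the k-th exterior power of ℝ^m, with its sup norm w.r.t. the wedge basis. -/
abbrev Lam (m k : ℕ) := Idx m k → ℝ

/-- Increasing enumeration of a k-element subset of Fin m. -/
def finsetEmb {m k : ℕ} (J : Idx m k) : Fin k → Fin m := fun a => (J.1.orderIsoOfFin J.2 a : Fin m)

/-- Action of an m×m matrix on the k-th exterior power, in the standard wedge basis
(given by the k×k minors). -/
def extPow {m k : ℕ} (g : Matrix (Fin m) (Fin m) ℝ) (v : Lam m k) : Lam m k :=
  fun J => ∑ K : Idx m k, (g.submatrix (finsetEmb J) (finsetEmb K)).det * v K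

/-- The wedge product v₁ ∧ ⋯ ∧ v_k of k vectors in ℝ^m, in coordinates. -/
def wedge {m k : ℕ} (vs : Fin k → (Fin m → ℝ)) : Lam m k :=
  fun J => (Matrix.of fun a b : Fin k => vs b (finsetEmb J a)).det

/-- The wedge product of k integer vectors. -/
def wedgeInt {m k : ℕ} (vs : Fin k → (Fin m → ℤ)) : Lam m k :=
  wedge (fun j i => (vs j i : ℝ))

/-- The projection π_i of Λ^k ℝ^m onto the span of the wedges e_J having exactly i factors
among e_0,…,e_d (zero if i is out of range). -/
def proj (d : ℕ) {m k : ℕ} (i : ℕ) (v : Lam m k) : Lam m k :=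
  fun J => if (J.1.filter (fun x : Fin m => (x : ℕ) ≤ d)).card = i then v J else 0

/-- The projection π₊ of Λ^k ℝ^{d+1} onto the span of the wedges e_J with 0 ∈ J. -/
def projPlus {d k : ℕ} (v : Lam (d+1) k) : Lam (d+1) k :=
  fun J => if (0 : Fin (d+1)) ∈ J.1 then v J else 0

/-- The projection π₋ of Λ^k ℝ^{d+1} onto the span of the wedges e_J with 0 ∉ J. -/
def projMinus {d k : ℕ} (v : Lam (d+1) k) : Lam (d+1) k :=
  fun J => if (0 : Fin (d+1)) ∉ J.1 then v J else 0

/-! ## The homogeneous space X = SL_{n+1}(ℝ)/SL_{n+1}(ℤ) -/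

noncomputable instance SLtop (m : ℕ) : TopologicalSpace (Matrix.SpecialLinearGroup (Fin m) ℝ) :=
  TopologicalSpace.induced (fun g => (g : Matrix (Fin m) (Fin m) ℝ)) inferInstance

abbrev SLn (m : ℕ) := Matrix.SpecialLinearGroup (Fin m) ℝ

/-- Γ = SL_m(ℤ) viewed as a subgroup of SL_m(ℝ). -/
def Gamma (m : ℕ) : Subgroup (SLn m) :=
  (Matrix.SpecialLinearGroup.map (n := Fin m) (Int.castRingHom ℝ)).range

/-- The space X = SL_m(ℝ)/SL_m(ℤ). -/
abbrev Xsp (m : ℕ) := SLn m ⧸ Gamma m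

/-! ## Matrices and one-parameter subgroups -/

lemma det_upperTri {m : ℕ} (M : Matrix (Fin m) (Fin m) ℝ)
    (hoff : ∀ i j : Fin m, (j : ℕ) < (i : ℕ) → M i j = 0)
    (hdiag : ∀ i, M i i = 1) : M.det = 1 := by
  have hbt : M.BlockTriangular id := fun i j hij => hoff i j hij
  rw [Matrix.det_of_upperTriangular hbt]
  simp [hdiag]

/-- u(s): the identity matrix with s₁,…,s_d placed in the first row (columns 1,…,d). -/
def uMat (n d : ℕ) (s : Fin d → ℝ) : Matrix (Fin (n+1)) (Fin (n+1)) ℝ :=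
  Matrix.of fun i j =>
    if i = j then 1
    else if h : i = 0 ∧ 1 ≤ (j : ℕ) ∧ (j : ℕ) ≤ d then s ⟨(j : ℕ) - 1, by omega⟩ else 0

/-- u(s) as an element of SL_{n+1}(ℝ). -/
def uSL (n d : ℕ) (s : Fin d → ℝ) : SLn (n+1) :=
  ⟨uMat n d s, det_upperTri _ (fun i j hij => by
      simp only [uMat, Matrix.of_apply]
      rw [if_neg (by rintro rfl; omega), dif_neg (by rintro ⟨rfl, h1, h2⟩; simp at hij)])
    (fun i => by simp [uMat])⟩

/-- u(x): the identity matrix with x ∈ ℝ^n placed in the first row. -/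
def uxMat (n : ℕ) (x : Fin n → ℝ) : Matrix (Fin (n+1)) (Fin (n+1)) ℝ :=
  Matrix.of fun i j =>
    if i = j then 1
    else if h : i = 0 ∧ 1 ≤ (j : ℕ) then x ⟨(j : ℕ) - 1, by have := j.isLt; omega⟩ else 0

/-- u(x) as an element of SL_{n+1}(ℝ). -/
def uxSL (n : ℕ) (x : Fin n → ℝ) : SLn (n+1) :=
  ⟨uxMat n x, det_upperTri _ (fun i j hij => by
      simp only [uxMat, Matrix.of_apply]
      rw [if_neg (by rintro rfl; omega), dif_neg (by rintro ⟨rfl, h1⟩; simp at hij)])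
    (fun i => by simp [uxMat])⟩

/-- u_A: the block unipotent matrix with I_{d+1}, I_{n−d} on the diagonal and A in the
upper-right block. -/
def uAMat (n d : ℕ) (A : Matrix (Fin (d+1)) (Fin (n-d)) ℝ) : Matrix (Fin (n+1)) (Fin (n+1)) ℝ :=
  Matrix.of fun i j =>
    if i = j then 1
    else if h : (i : ℕ) ≤ d ∧ d + 1 ≤ (j : ℕ) then
      A ⟨(i : ℕ), by omega⟩ ⟨(j : ℕ) - (d+1), by have := j.isLt; omega⟩ else 0

/-- u_A as an element of SL_{n+1}(ℝ). -/
def uASL (n d : ℕ) (A : Matrix (Fin (d+1)) (Fin (n-d)) ℝ) : SLn (n+1) :=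
  ⟨uAMat n d A, det_upperTri _ (fun i j hij => by
      simp only [uAMat, Matrix.of_apply]
      rw [if_neg (by rintro rfl; omega), dif_neg (by rintro ⟨h1, h2⟩; omega)])
    (fun i => by simp [uAMat])⟩

lemma sum_ite_fin (m k : ℕ) (hk : k ≤ m) (a b : ℝ) :
    (∑ i : Fin m, if (i : ℕ) < k then a else b) = k * a + ((m - k : ℕ) : ℝ) * b := by
  rw [Fin.sum_univ_eq_sum_range (fun i => if i < k then a else b) m]
  rw [Finset.range_eq_Ico, ← Finset.sum_Ico_consecutive _ (Nat.zero_le k) hk]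
  rw [Finset.sum_congr rfl (fun i hi => if_pos (Finset.mem_Ico.mp hi).2),
    Finset.sum_congr rfl (g := fun _ => b)
      (fun i hi => if_neg (Nat.not_lt.mpr (Finset.mem_Ico.mp hi).1))]
  simp [Nat.card_Ico, mul_comm]

/-- A diagonal matrix with entries exp (f i), as an element of SL_m(ℝ). -/
def diagSL (m : ℕ) (f : Fin m → ℝ) (h : ∑ i, f i = 0) : SLn m :=
  ⟨Matrix.diagonal fun i => Real.exp (f i), by
    rw [Matrix.det_diagonal, ← Real.exp_sum, h, Real.exp_zero]⟩

/-- b_t = diag(e^{(n−d)t/((d+1)(n+1))}·I_{d+1}, e^{−t/(n+1)}·I_{n−d}) ∈ SL_{n+1}(ℝ). -/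
def btSL (n d : ℕ) (h : d ≤ n) (t : ℝ) : SLn (n+1) :=
  diagSL (n+1)
    (fun i => if (i : ℕ) < d + 1 then ((n : ℝ) - (d : ℝ)) * t / (((d : ℝ) + 1) * ((n : ℝ) + 1))
      else -t / ((n : ℝ) + 1))
    (by
      rw [sum_ite_fin (n+1) (d+1) (by omega)]
      have h1 : ((n + 1 - (d + 1) : ℕ) : ℝ) = (n : ℝ) - (d : ℝ) := by
        have h2 : (n + 1 - (d + 1) : ℕ) = n - d := by omega
        rw [h2, Nat.cast_sub h]
      rw [h1]
      have hd1 : ((d : ℝ) + 1) ≠ 0 := by positivity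
      have hn1 : ((n : ℝ) + 1) ≠ 0 := by positivity
      field_simp
      push_cast
      ring)

/-- c_t = diag(e^{dt/(d+1)}, e^{−t/(d+1)}·I_d, I_{n−d}) ∈ SL_{n+1}(ℝ). -/
def ctSL (n d : ℕ) (h : d ≤ n) (t : ℝ) : SLn (n+1) :=
  diagSL (n+1)
    (fun i => if (i : ℕ) = 0 then (d : ℝ) * t / ((d : ℝ) + 1)
      else if (i : ℕ) < d + 1 then -t / ((d : ℝ) + 1) else 0)
    (by
      rw [Fin.sum_univ_succ]
      simp only [Fin.val_zero, if_pos rfl, Fin.val_succ]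
      have key : ∀ i : Fin n,
          (if (i : ℕ) + 1 = 0 then (d : ℝ) * t / ((d : ℝ) + 1)
            else if (i : ℕ) + 1 < d + 1 then -t / ((d : ℝ) + 1) else 0)
          = (if (i : ℕ) < d then -t / ((d : ℝ) + 1) else 0) := by
        intro i
        rw [if_neg (by omega)]
        by_cases hc : (i : ℕ) < d
        · rw [if_pos (by omega), if_pos hc]
        · rw [if_neg (by omega), if_neg hc]
      rw [Finset.sum_congr rfl fun i _ => key i, sum_ite_fin n d h]
      have hd1 : ((d : ℝ) + 1) ≠ 0 := by positivity
      field_simp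
      simp only [if_true, mul_zero, add_zero]
      field_simp
      try ring)

/-- g_t = diag(e^{nt/(n+1)}, e^{−t/(n+1)}·I_n) ∈ SL_{n+1}(ℝ). -/
def gtSL (n : ℕ) (t : ℝ) : SLn (n+1) :=
  diagSL (n+1)
    (fun i => if (i : ℕ) = 0 then (n : ℝ) * t / ((n : ℝ) + 1) else -t / ((n : ℝ) + 1))
    (by
      rw [Fin.sum_univ_succ]
      simp only [Fin.val_zero, if_pos rfl, Fin.val_succ]
      have key : ∀ i : Fin n,
          (if (i : ℕ) + 1 = 0 then (n : ℝ) * t / ((n : ℝ) + 1) else -t / ((n : ℝ) + 1))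
          = -t / ((n : ℝ) + 1) := fun i => if_neg (by omega)
      rw [Finset.sum_congr rfl fun i _ => key i, Finset.sum_const, Finset.card_univ,
        Fintype.card_fin, nsmul_eq_mul]
      have hn1 : ((n : ℝ) + 1) ≠ 0 := by positivity
      field_simp
      simp only [if_true, mul_zero, add_zero]
      field_simp
      try ring)

/-- c_t = diag(e^{dt/(d+1)}, e^{−t/(d+1)}·I_d) as a (d+1)×(d+1) matrix. -/
def ctMat1 (d : ℕ) (t : ℝ) : Matrix (Fin (d+1)) (Fin (d+1)) ℝ :=
  Matrix.diagonal fun i =>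
    if (i : ℕ) = 0 then Real.exp ((d : ℝ) * t / ((d : ℝ) + 1))
    else Real.exp (-t / ((d : ℝ) + 1))

/-- c_t = diag(e^{dt/(d+1)}, e^{−t/(d+1)}·I_d, I_{n−d}) as an (n+1)×(n+1) matrix. -/
def ctMatN (n d : ℕ) (t : ℝ) : Matrix (Fin (n+1)) (Fin (n+1)) ℝ :=
  Matrix.diagonal fun i =>
    if (i : ℕ) = 0 then Real.exp ((d : ℝ) * t / ((d : ℝ) + 1))
    else if (i : ℕ) < d + 1 then Real.exp (-t / ((d : ℝ) + 1)) else 1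

/-- The identification Fin (n+1) ≃ Fin (d+1) ⊕ Fin (n−d). -/
def finSplit (n d : ℕ) (h : d ≤ n) : Fin (n+1) ≃ Fin (d+1) ⊕ Fin (n-d) :=
  (finCongr (by omega)).trans finSumFinEquiv.symm

/-- The embedding SL_{d+1}(ℝ) → SL_{n+1}(ℝ), h ↦ diag(h, I_{n−d}); its image is the
subgroup H of the paper. -/
def embedSL (n d : ℕ) (h : d ≤ n) (g : Matrix.SpecialLinearGroup (Fin (d+1)) ℝ) : SLn (n+1) :=
  ⟨Matrix.reindex (finSplit n d h).symm (finSplit n d h).symm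
      (Matrix.fromBlocks (g : Matrix (Fin (d+1)) (Fin (d+1)) ℝ) 0 0
        (1 : Matrix (Fin (n-d)) (Fin (n-d)) ℝ)), by
    rw [Matrix.det_reindex_self, Matrix.det_fromBlocks_zero₂₁, Matrix.det_one, mul_one]
    exact g.2⟩

/-! ## Height functions and exponents -/

/-- The cube I^d = [−1/2, 1/2]^d. -/
def Icube (d : ℕ) : Set (Fin d → ℝ) := Set.univ.pi fun _ => Set.Icc (-(1/2) : ℝ) (1/2)

/-- The function φ_ε on Λ^k ℝ^{n+1}, with values in [0,∞] (here δ_k = (n+1−k)k). -/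
def phiFn (n d k : ℕ) (ε : ℝ) (v : Lam (n+1) k) : ℝ≥0∞ :=
  if ‖proj d 0 v + proj d (d+1) v‖ < ε ^ ((n + 1 - k) * k) then
    ⨅ i ∈ Finset.Icc 1 d,
      ENNReal.ofReal
          (ε ^ ((((d : ℝ) + 1) / (((d : ℝ) + 1) - (i : ℝ))) * (((n + 1 - k) * k : ℕ) : ℝ)))
        * ENNReal.ofReal ‖proj d i v‖ ^ (-(((d : ℝ) + 1) / (((d : ℝ) + 1) - (i : ℝ))))
  else 0

/-- v ∈ Λ^k ℝ^{n+1} is a y-integral vector: v = g(v₁ ∧ ⋯ ∧ v_k) for a representative g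
of y and linearly independent integer vectors v₁,…,v_k. -/
def IsIntegralVec (n : ℕ) {k : ℕ} (y : Xsp (n+1)) (v : Lam (n+1) k) : Prop :=
  ∃ g : SLn (n+1), (QuotientGroup.mk g : Xsp (n+1)) = y ∧
    ∃ w : Fin k → (Fin (n+1) → ℤ), LinearIndependent ℤ w ∧
      v = extPow (g : Matrix (Fin (n+1)) (Fin (n+1)) ℝ) (wedgeInt w)

/-- The Margulis height function α_ε^θ on X. -/
def alphaF (n d : ℕ) (ε θ : ℝ) (y : Xsp (n+1)) : ℝ≥0∞ :=
  ⨆ k ∈ Finset.Icc 1 n, ⨆ v : Lam (n+1) k, ⨆ _ : v ≠ 0 ∧ IsIntegralVec n y v, phiFn n d k ε v ^ θ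

/-- The dynamical exponent ρ(y; b_t, α) = limsup_{t→∞} log α(b_t y) / t ∈ [−∞,∞]. -/
def rhoExp (n d : ℕ) (h : d ≤ n) (α : Xsp (n+1) → ℝ≥0∞) (y : Xsp (n+1)) : EReal :=
  Filter.limsup (fun t : ℝ => ENNReal.log (α (btSL n d h t • y)) / (t : EReal)) Filter.atTop

/-- α̃_δ(y) = ∫₀^∞ e^{−δt} α(b_t y) dt. -/
def atilde (n d : ℕ) (h : d ≤ n) (δ : ℝ) (α : Xsp (n+1) → ℝ≥0∞) (y : Xsp (n+1)) : ℝ≥0∞ :=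
  ∫⁻ t in Set.Ioi (0 : ℝ), ENNReal.ofReal (Real.exp (-δ * t)) * α (btSL n d h t • y)

/-- α is Lipschitz with respect to the action of H = diag(SL_{d+1}(ℝ), I_{n−d}). -/
def LipschitzWrtH (n d : ℕ) (h : d ≤ n) (α : Xsp (n+1) → ℝ≥0∞) : Prop :=
  ∀ F : Set (SLn (n+1)), F ⊆ Set.range (embedSL n d h) → IsCompact F →
    ∃ C : ℝ, 1 ≤ C ∧ ∀ g ∈ F, ∀ y : Xsp (n+1), α (g • y) ≤ ENNReal.ofReal C * α y

/-- y ∈ X is g_t-divergent on average. -/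
def gDivergentOnAvg (n : ℕ) (y : Xsp (n+1)) : Prop :=
  ∀ K : Set (Xsp (n+1)), IsCompact K →
    Tendsto (fun N : ℕ => ((Set.ncard {l : ℕ | 1 ≤ l ∧ l ≤ N ∧ gtSL n l • y ∈ K} : ℝ) / N))
      atTop (nhds 0)

/-- The set B_x(M,t,m;N) of the paper (for x = y_A and the height function α̃ = α̃_δ). -/
def Bset (n d : ℕ) (h : d ≤ n) (δ : ℝ) (α : Xsp (n+1) → ℝ≥0∞) (yA : Xsp (n+1))
    (M t : ℝ) (m N : ℕ) : Set (Fin d → ℝ) :=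
  {s : Fin d → ℝ | s ∈ Icube d ∧
    atilde n d h δ α ((gtSL n ((m : ℝ) * t) * uSL n d s) • yA) < ENNReal.ofReal M ∧
    ∀ l : ℕ, 1 ≤ l → l ≤ N →
      ENNReal.ofReal M ≤ atilde n d h δ α ((gtSL n (((m : ℝ) + (l : ℝ)) * t) * uSL n d s) • yA)}

/-! ## Diophantine approximation -/

/-- x ∈ ℝ^n is a singular vector. -/
def IsSingular (n : ℕ) (x : Fin n → ℝ) : Prop :=
  ∀ ε : ℝ, 0 < ε → ∃ N₀ : ℝ, ∀ N : ℝ, N₀ ≤ N → ∃ q : Fin n → ℤ, q ≠ 0 ∧ ∃ p : ℤ,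
    |(∑ i, (q i : ℝ) * x i) - (p : ℝ)| ≤ ε * N ^ (-(n : ℝ)) ∧ ‖q‖ ≤ N

/-- The vector (s, s̃A) ∈ ℝ^n, where s̃ = (1, s₁, …, s_d). -/
def xvec (n d : ℕ) (h : d ≤ n) (A : Matrix (Fin (d+1)) (Fin (n-d)) ℝ) (s : Fin d → ℝ) :
    Fin n → ℝ :=
  fun i => Fin.append s (Matrix.vecMul (Fin.cons 1 s) A) (Fin.cast (Nat.add_sub_cancel' h).symm i)

/-- The set of exponents ω for which ‖Aq − p‖ ≤ ‖q‖^{−ω} has infinitely many solutions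
q ∈ ℤ^{n−d} \ {0}, p ∈ ℤ^{d+1}. -/
def diophSet (n d : ℕ) (A : Matrix (Fin (d+1)) (Fin (n-d)) ℝ) : Set ℝ :=
  {ω : ℝ | {qp : (Fin (n-d) → ℤ) × (Fin (d+1) → ℤ) | qp.1 ≠ 0 ∧
    ‖A.mulVec (fun i => (qp.1 i : ℝ)) - (fun i => (qp.2 i : ℝ))‖ ≤ ‖qp.1‖ ^ (-ω)}.Infinite}

/-- The Diophantine exponent ω(A) ∈ [−∞, +∞]. -/
def omegaExp (n d : ℕ) (A : Matrix (Fin (d+1)) (Fin (n-d)) ℝ) : EReal :=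
  sSup (Real.toEReal '' diophSet n d A)

end

/-!
Since `u(s)` fixes `e₀` and sends `e_j` to `e_j + s_j e₀`, expanding the minors of `u(s)` along
row `0` shows that for `0 ∈ J` the coordinate `(u(s) v)_J` is `v_J` plus a signed sum of terms
`s_{m-1} v_K` over the `K ∌ 0` with `K = (J ∖ {0}) ∪ {m}`.

If `β = |v_K|` is not too small for some `K ∌ 0`, then for each `m ∈ K` the coordinate
`J = {0} ∪ K ∖ {m}` equals `± v_K s_{m-1}` plus terms free of the variables `s_{m'-1}`, `m' ∈ K`.
By Fubini over these `i` variables, `D⁺(v, r)` has measure at most `(2r/β)^i`. Otherwise any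
coordinate with `|v_J| = 1` has `0 ∈ J`, and `|(u(s) v)_J| > 1/2` on the whole cube, so
`D⁺(v, r)` is empty for `r ≤ 1/2`.
-/

open Finset

lemma eq_and_eq_of_erase_eq_erase {α : Type*} [DecidableEq α] {s t : Finset α} {x y : α}
    (hx : x ∈ s) (hy : y ∈ t) (hys : y ∈ s) (h : t.erase y = s.erase x) : y = x ∧ t = s := by
  have hyx : y = x := by
    by_contra hne
    exact notMem_erase y t (h ▸ mem_erase.2 ⟨hne, hys⟩)
  subst hyx
  exact ⟨rfl, by rw [← insert_erase hy, h, insert_erase hx]⟩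

section Wedge

variable {m k : ℕ}

lemma finsetEmb_mem (J : Idx m k) (a : Fin k) : finsetEmb J a ∈ J.1 :=
  (J.1.orderIsoOfFin J.2 a).2

lemma finsetEmb_eq_orderEmbOfFin (J : Idx m k) : finsetEmb J = J.1.orderEmbOfFin J.2 := by
  ext a
  simp [finsetEmb]

lemma finsetEmb_strictMono (J : Idx m k) : StrictMono (finsetEmb J) := by
  rw [finsetEmb_eq_orderEmbOfFin]
  exact (J.1.orderEmbOfFin J.2).strictMono

lemma exists_finsetEmb_eq (J : Idx m k) {x : Fin m} (hx : x ∈ J.1) :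
    ∃ a, finsetEmb J a = x :=
  ⟨(J.1.orderIsoOfFin J.2).symm ⟨x, hx⟩, by simp [finsetEmb]⟩

def Idx.eraseAt (K : Idx m (k + 1)) (j : Fin (k + 1)) : Idx m k :=
  ⟨K.1.erase (finsetEmb K j), by rw [card_erase_of_mem (finsetEmb_mem K j), K.2]; rfl⟩

lemma Idx.coe_eraseAt (K : Idx m (k + 1)) (j : Fin (k + 1)) :
    (K.eraseAt j).1 = K.1.erase (finsetEmb K j) :=
  rfl

lemma finsetEmb_eraseAt (K : Idx m (k + 1)) (j : Fin (k + 1)) :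
    finsetEmb (K.eraseAt j) = finsetEmb K ∘ j.succAbove := by
  rw [finsetEmb_eq_orderEmbOfFin]
  refine (orderEmbOfFin_unique _ (fun a => ?_) ((finsetEmb_strictMono K).comp
    (Fin.strictMono_succAbove j))).symm
  exact mem_erase.2 ⟨(finsetEmb_strictMono K).injective.ne (Fin.succAbove_ne j a),
    finsetEmb_mem K _⟩

lemma finsetEmb_zero_of_zero_mem {d : ℕ} (J : Idx (d + 1) (k + 1)) (h0 : 0 ∈ J.1) :
    finsetEmb J 0 = 0 := by
  obtain ⟨a, ha⟩ := exists_finsetEmb_eq J h0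
  exact Fin.le_zero_iff.1 (ha ▸ (finsetEmb_strictMono J).monotone (Fin.zero_le a))

end Wedge

section Unipotent

variable {d k : ℕ}

lemma uxMat_apply_of_ne_zero (s : Fin d → ℝ) {x : Fin (d + 1)} (hx : x ≠ 0) (y : Fin (d + 1)) :
    uxMat d s x y = if x = y then 1 else 0 := by
  simp [uxMat, hx]

lemma uxMat_zero_succ (s : Fin d → ℝ) (l : Fin d) : uxMat d s 0 l.succ = s l := by
  simp [uxMat, (Fin.succ_ne_zero l).symm]

lemma det_uxMat_submatrix_self (s : Fin d → ℝ) (J : Idx (d + 1) k) :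
    ((uxMat d s).submatrix (finsetEmb J) (finsetEmb J)).det = 1 := by
  refine det_upperTri _ (fun a b hab => ?_) (fun a => by simp [uxMat])
  have hlt := finsetEmb_strictMono J hab
  simp only [submatrix_apply]
  rw [uxMat_apply_of_ne_zero s ((Fin.zero_le _).trans_lt hlt).ne', if_neg hlt.ne']

/-- Rows of `u(s)` other than row `0` are rows of the identity. -/
lemma det_uxMat_submatrix_eq_ite (s : Fin d → ℝ) (J K : Idx (d + 1) k) (h0 : 0 ∈ J.1 → 0 ∈ K.1) :
    ((uxMat d s).submatrix (finsetEmb J) (finsetEmb K)).det = if J = K then 1 else 0 := by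
  split_ifs with hJK
  · exact hJK ▸ det_uxMat_submatrix_self s J
  obtain ⟨x, hxJ, hxK⟩ : ∃ x ∈ J.1, x ∉ K.1 := not_subset.1 fun hsub =>
    hJK (Subtype.ext (eq_of_subset_of_card_le hsub (by rw [J.2, K.2])))
  have hx0 : x ≠ 0 := by rintro rfl; exact hxK (h0 hxJ)
  obtain ⟨a, rfl⟩ := exists_finsetEmb_eq J hxJ
  refine det_eq_zero_of_row_eq_zero a fun b => ?_
  rw [submatrix_apply, uxMat_apply_of_ne_zero s hx0, if_neg]
  rintro h
  exact hxK (h ▸ finsetEmb_mem K b)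

lemma det_uxMat_submatrix_of_zero_mem {i : ℕ} (s : Fin d → ℝ) (J K : Idx (d + 1) i)
    (hJ : 0 ∈ J.1) :
    ((uxMat d s).submatrix (finsetEmb J) (finsetEmb K)).det =
      ∑ j : Fin i, (-1) ^ (j : ℕ) * uxMat d s 0 (finsetEmb K j) *
        if K.1.erase (finsetEmb K j) = J.1.erase 0 then 1 else 0 := by
  obtain _ | k := i
  · simp [card_eq_zero.1 J.2] at hJ
  have hJ0 := finsetEmb_zero_of_zero_mem J hJ
  rw [det_succ_row_zero]
  refine sum_congr rfl fun j _ => ?_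
  have hrows : finsetEmb J ∘ Fin.succ = finsetEmb (J.eraseAt 0) := by
    rw [finsetEmb_eraseAt, Fin.succAbove_zero]
  have hJ' : (J.eraseAt 0).1 = J.1.erase 0 := by rw [Idx.coe_eraseAt, hJ0]
  rw [submatrix_apply, hJ0, submatrix_submatrix, hrows, ← finsetEmb_eraseAt,
    det_uxMat_submatrix_eq_ite s _ _ (by simp [hJ'])]
  simp [Subtype.ext_iff, hJ', Idx.coe_eraseAt, eq_comm]

end Unipotent

section Plus

variable {d i : ℕ}

lemma extPow_uxMat_apply_of_zero_mem (s : Fin d → ℝ) (v : Lam (d + 1) i) {J : Idx (d + 1) i}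
    (hJ : 0 ∈ J.1) :
    extPow (uxMat d s) v J = v J + ∑ K with 0 ∉ K.1, ∑ j : Fin i,
      (-1) ^ (j : ℕ) * uxMat d s 0 (finsetEmb K j) *
        (if K.1.erase (finsetEmb K j) = J.1.erase 0 then 1 else 0) * v K := by
  rw [extPow, ← sum_filter_add_sum_filter_not univ fun K : Idx (d + 1) i => 0 ∈ K.1]
  congr 1
  · rw [sum_congr rfl fun K hK => by
      rw [det_uxMat_submatrix_eq_ite s J K fun _ => (mem_filter.1 hK).2]]
    simp [hJ]
  · refine sum_congr rfl fun K _ => ?_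
    rw [det_uxMat_submatrix_of_zero_mem s J K hJ, sum_mul]

lemma abs_uxMat_zero_le {s : Fin d → ℝ} (hs : s ∈ Icube d) {y : Fin (d + 1)} (hy : y ≠ 0) :
    |uxMat d s 0 y| ≤ 1 / 2 := by
  obtain ⟨l, rfl⟩ := Fin.exists_succ_eq.2 hy
  rw [uxMat_zero_succ]
  exact abs_le.2 (hs l (Set.mem_univ l))

lemma abs_extPow_uxMat_apply_sub_le {s : Fin d → ℝ} (hs : s ∈ Icube d) (v : Lam (d + 1) i)
    {J : Idx (d + 1) i} (hJ : 0 ∈ J.1) :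
    |extPow (uxMat d s) v J - v J| ≤ i / 2 * ∑ K with 0 ∉ K.1, |v K| := by
  rw [extPow_uxMat_apply_of_zero_mem s v hJ, add_sub_cancel_left, mul_sum]
  refine (abs_sum_le_sum_abs _ _).trans (sum_le_sum fun K hK => ?_)
  refine (abs_sum_le_sum_abs _ _).trans ?_
  have hterm : ∀ j : Fin i, |(-1) ^ (j : ℕ) * uxMat d s 0 (finsetEmb K j) *
      (if K.1.erase (finsetEmb K j) = J.1.erase 0 then 1 else 0) * v K| ≤ 1 / 2 * |v K| := by
    intro j
    have hu := abs_uxMat_zero_le hs fun h => (mem_filter.1 hK).2 (h ▸ finsetEmb_mem K j)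
    have hite : |(if K.1.erase (finsetEmb K j) = J.1.erase 0 then 1 else 0 : ℝ)| ≤ 1 := by
      split_ifs <;> simp
    calc _ = |uxMat d s 0 (finsetEmb K j)| *
          |(if K.1.erase (finsetEmb K j) = J.1.erase 0 then 1 else 0 : ℝ)| * |v K| := by
          simp only [abs_mul, abs_pow, abs_neg, abs_one, one_pow, one_mul]
      _ ≤ 1 / 2 * 1 * |v K| := by gcongr
      _ = 1 / 2 * |v K| := by ring
  refine (sum_le_sum fun j _ => hterm j).trans_eq ?_
  simp only [sum_const, card_univ, Fintype.card_fin, nsmul_eq_mul]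
  ring

/-- In the expansion of `(u(s) v)_J`, `J = {0} ∪ K ∖ {l.succ}`, the only term that involves some
`s l'` with `l'.succ ∈ K` is the one of index `(K, p)`, where `finsetEmb K p = l.succ`. -/
lemma uxMat_zero_sub_mul_ite_eq_ite (s : Fin d → ℝ) {K K' : Idx (d + 1) i} (hK' : 0 ∉ K'.1)
    {l : Fin d} (hl : l.succ ∈ K.1) {p : Fin i} (hp : finsetEmb K p = l.succ) (j : Fin i) :
    (uxMat d s 0 (finsetEmb K' j) -
        uxMat d (fun l' => if l'.succ ∈ K.1 then 0 else s l') 0 (finsetEmb K' j)) *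
      (if K'.1.erase (finsetEmb K' j) = K.1.erase l.succ then 1 else 0) =
      if K' = K ∧ j = p then s l else 0 := by
  obtain ⟨l', hl'⟩ := Fin.exists_succ_eq.2 fun h => hK' (h ▸ finsetEmb_mem K' j)
  rw [← hl', uxMat_zero_succ, uxMat_zero_succ]
  by_cases hl'K : l'.succ ∈ K.1
  · have hiff : K'.1.erase l'.succ = K.1.erase l.succ ↔ K' = K ∧ j = p := by
      refine ⟨fun h => ?_, fun ⟨hKK, hjp⟩ => by rw [hl', hKK, hjp, hp]⟩
      obtain ⟨hl'l, hKK⟩ := eq_and_eq_of_erase_eq_erase hl (hl' ▸ finsetEmb_mem K' j) hl'K h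
      obtain rfl : K' = K := Subtype.ext hKK
      exact ⟨rfl, (finsetEmb_strictMono K').injective (hl'.symm.trans (hl'l.trans hp.symm))⟩
    rw [if_pos hl'K, sub_zero, mul_ite, mul_one, mul_zero]
    refine if_ctx_congr hiff (fun ⟨hKK, hjp⟩ => ?_) fun _ => rfl
    subst hKK hjp
    rw [Fin.succ_injective _ (hl'.trans hp)]
  · rw [if_neg hl'K, sub_self, zero_mul, if_neg]
    rintro ⟨rfl, rfl⟩
    exact hl'K (hl' ▸ hp ▸ hl)

lemma exists_extPow_uxMat_apply_eq (v : Lam (d + 1) i) {K : Idx (d + 1) i} (hK : 0 ∉ K.1)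
    {l : Fin d} (hl : l.succ ∈ K.1) {J : Idx (d + 1) i} (hJ : J.1 = insert 0 (K.1.erase l.succ)) :
    ∃ ε : ℝ, |ε| = 1 ∧ ∀ s : Fin d → ℝ, extPow (uxMat d s) v J =
      ε * v K * s l + extPow (uxMat d fun l' => if l'.succ ∈ K.1 then 0 else s l') v J := by
  obtain ⟨p, hp⟩ := exists_finsetEmb_eq K hl
  refine ⟨(-1) ^ (p : ℕ), by simp, fun s => ?_⟩
  have h0J : 0 ∈ J.1 := hJ ▸ mem_insert_self _ _
  have hJ0 : J.1.erase 0 = K.1.erase l.succ := by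
    rw [hJ, erase_insert fun h => hK (mem_of_mem_erase h)]
  have hdiff : ∑ K' with 0 ∉ K'.1, ∑ j : Fin i,
      (-1) ^ (j : ℕ) * (if K' = K ∧ j = p then s l else 0) * v K' = (-1) ^ (p : ℕ) * v K * s l := by
    rw [mul_right_comm]
    simp [ite_and, hK]
  rw [extPow_uxMat_apply_of_zero_mem s v h0J, extPow_uxMat_apply_of_zero_mem _ v h0J,
    add_comm _ (v J + _), ← sub_eq_iff_eq_add', add_sub_add_left_eq_sub, ← hdiff,
    ← sum_sub_distrib]
  refine sum_congr rfl fun K' hK' => ?_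
  rw [← sum_sub_distrib]
  refine sum_congr rfl fun j _ => ?_
  rw [hJ0, ← uxMat_zero_sub_mul_ite_eq_ite s (mem_filter.1 hK').2 hl hp j]
  ring

end Plus

section Slicing

variable {ι : Type*} [Fintype ι]

lemma volume_le_of_volume_slice_le (p : ι → Prop) [DecidablePred p] {Z : Set (ι → ℝ)}
    (hZ : MeasurableSet Z) (hZcube : ∀ s ∈ Z, ∀ l, ¬ p l → s l ∈ Set.Icc (-(1 / 2) : ℝ) (1 / 2))
    {c : ℝ≥0∞} (hslice : ∀ y : {l // ¬ p l} → ℝ,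
      volume {x : {l // p l} → ℝ | (fun l => if h : p l then x ⟨l, h⟩ else y ⟨l, h⟩) ∈ Z} ≤ c) :
    volume Z ≤ c := by
  set e := MeasurableEquiv.piEquivPiSubtypeProd (fun _ : ι => ℝ) p
  set B : Set ({l // ¬ p l} → ℝ) := Set.univ.pi fun _ => Set.Icc (-(1 / 2)) (1 / 2)
  have hB : MeasurableSet B := MeasurableSet.univ_pi fun _ => measurableSet_Icc
  have hslice' : ∀ y,
      volume ((fun x => (x, y)) ⁻¹' (e.symm ⁻¹' Z)) ≤ B.indicator (fun _ => c) y := by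
    intro y
    by_cases hy : y ∈ B
    · rw [Set.indicator_of_mem hy]
      exact hslice y
    · rw [Set.indicator_of_notMem hy, nonpos_iff_eq_zero, measure_eq_zero_iff_ae_notMem]
      refine Filter.Eventually.of_forall fun x hx => hy fun l _ => ?_
      simpa [e, l.2] using hZcube _ hx l l.2
  calc volume Z = volume (e.symm ⁻¹' Z) :=
        (((volume_preserving_piEquivPiSubtypeProd _ _).symm e).measure_preimage
          hZ.nullMeasurableSet).symm
    _ = ∫⁻ y, volume ((fun x => (x, y)) ⁻¹' (e.symm ⁻¹' Z)) := by
        rw [Measure.volume_eq_prod]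
        exact Measure.prod_apply_symm (e.symm.measurable hZ)
    _ ≤ ∫⁻ y, B.indicator (fun _ => c) y := lintegral_mono hslice'
    _ = c := by
        rw [lintegral_indicator_const hB, volume_pi_pi]
        norm_num

lemma mem_closedBall_of_abs_mul_add_le {a c r x : ℝ} (ha : a ≠ 0) (h : |a * x + c| ≤ r) :
    x ∈ Metric.closedBall (-c / a) (r / |a|) := by
  have hxa : (x - -c / a) * a = a * x + c := by field_simp; ring
  rwa [Metric.mem_closedBall, Real.dist_eq, le_div_iff₀ (abs_pos.2 ha), ← abs_mul, hxa]

lemma volume_le_of_affine (p : ι → Prop) [DecidablePred p] {f : ι → (ι → ℝ) → ℝ} {a : ι → ℝ}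
    {β r : ℝ} (hβ : 0 < β) (hr : 0 ≤ r) (hf : ∀ l, p l → Measurable (f l))
    (ha : ∀ l, p l → β ≤ |a l|)
    (hfa : ∀ l, p l → ∀ s, f l s = a l * s l + f l fun l' => if p l' then 0 else s l') :
    volume {s : ι → ℝ | s ∈ Set.univ.pi (fun _ => Set.Icc (-(1 / 2) : ℝ) (1 / 2)) ∧
      ∀ l, p l → |f l s| ≤ r} ≤ ENNReal.ofReal (2 * r / β) ^ Fintype.card {l // p l} := by
  have hmeas : MeasurableSet {s : ι → ℝ | ∀ l, p l → |f l s| ≤ r} := by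
    simp only [Set.ofPred_forall]
    exact .iInter fun l => .iInter fun hl => measurableSet_le (hf l hl).abs measurable_const
  refine volume_le_of_volume_slice_le p ((MeasurableSet.univ_pi fun _ => measurableSet_Icc).inter
    hmeas) (fun s hs l _ => hs.1 l (Set.mem_univ l)) fun y => ?_
  set z : ι → ℝ := fun l => if h : p l then 0 else y ⟨l, h⟩
  calc _ ≤ volume (Set.univ.pi fun l : {l // p l} =>
        Metric.closedBall (-f l z / a l) (r / |a l|)) := by
        refine measure_mono fun x hx l _ => ?_
        have hz : (fun l' => if p l' then 0 else
            (fun l => if h : p l then x ⟨l, h⟩ else y ⟨l, h⟩) l') = z := by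
          ext l'
          by_cases hl' : p l' <;> simp [hl', z]
        have hal : a l ≠ 0 := fun h => by linarith [ha l l.2, h ▸ abs_zero (α := ℝ)]
        have hfl := hx.2 l l.2
        rw [hfa l l.2, hz, dif_pos l.2] at hfl
        exact mem_closedBall_of_abs_mul_add_le hal hfl
    _ = ∏ l : {l // p l}, ENNReal.ofReal (2 * (r / |a l|)) := by
        simp only [volume_pi_pi, Real.volume_closedBall]
    _ ≤ ∏ _l : {l // p l}, ENNReal.ofReal (2 * r / β) := by
        refine prod_le_prod' fun l _ => ENNReal.ofReal_le_ofReal ?_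
        rw [← mul_div_assoc]
        exact div_le_div_of_nonneg_left (by positivity) hβ (ha l l.2)
    _ = ENNReal.ofReal (2 * r / β) ^ Fintype.card {l // p l} := by simp

end Slicing

section Dplus

variable {d i : ℕ}

lemma continuous_extPow_uxMat_apply (v : Lam (d + 1) i) (J : Idx (d + 1) i) :
    Continuous fun s : Fin d → ℝ => extPow (uxMat d s) v J := by
  refine continuous_finsetSum _ fun K _ => .mul (.matrix_det (continuous_matrix fun a b => ?_))
    continuous_const
  simp only [submatrix_apply, uxMat, of_apply]
  split_ifs
  · exact continuous_const
  · exact continuous_apply _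
  · exact continuous_const

lemma abs_le_norm_projPlus (w : Lam (d + 1) i) {J : Idx (d + 1) i} (hJ : 0 ∈ J.1) :
    |w J| ≤ ‖projPlus w‖ := by
  simpa [projPlus, hJ] using norm_le_pi_norm (projPlus w) J

lemma card_subtype_succ_mem (K : Idx (d + 1) i) (hK : 0 ∉ K.1) :
    Fintype.card {l : Fin d // l.succ ∈ K.1} = i := by
  refine Eq.trans ?_ K.2
  rw [Fintype.card_subtype, ← card_map (Fin.succEmb d)]
  congr 1
  ext x
  cases x using Fin.cases <;> simp [hK]

lemma volume_Dplus_le_of_zero_not_mem (v : Lam (d + 1) i) {K : Idx (d + 1) i} (hK : 0 ∉ K.1)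
    (hvK : v K ≠ 0) {r : ℝ} (hr : 0 ≤ r) :
    volume {s | s ∈ Icube d ∧ ‖projPlus (extPow (uxMat d s) v)‖ ≤ r} ≤
      ENNReal.ofReal (2 * r / |v K|) ^ i := by
  have hJ : ∀ l : Fin d, l.succ ∈ K.1 → ∃ J : Idx (d + 1) i, J.1 = insert 0 (K.1.erase l.succ) :=
    fun l hl => ⟨⟨_, by rw [card_insert_of_notMem fun h => hK (mem_of_mem_erase h),
      card_erase_of_mem hl, K.2, Nat.sub_add_cancel (card_pos.2 ⟨_, hl⟩ |>.trans_eq K.2)]⟩, rfl⟩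
  have : Nonempty (Idx (d + 1) i) := ⟨K⟩
  choose! J hJ using hJ
  choose! ε hε hεf using fun l hl => exists_extPow_uxMat_apply_eq v hK hl (hJ l hl)
  calc _ ≤ volume {s | s ∈ Icube d ∧ ∀ l : Fin d, l.succ ∈ K.1 →
        |extPow (uxMat d s) v (J l)| ≤ r} :=
        measure_mono fun s hs => ⟨hs.1, fun l hl =>
          (abs_le_norm_projPlus _ (by simp [hJ l hl])).trans hs.2⟩
    _ ≤ ENNReal.ofReal (2 * r / |v K|) ^ Fintype.card {l : Fin d // l.succ ∈ K.1} :=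
        volume_le_of_affine _ (abs_pos.2 hvK) hr
          (fun l _ => (continuous_extPow_uxMat_apply v _).measurable)
          (fun l hl => by rw [abs_mul, hε l hl, one_mul]) hεf
    _ = _ := by rw [card_subtype_succ_mem K hK]

lemma half_lt_norm_projPlus {s : Fin d → ℝ} (hs : s ∈ Icube d) (v : Lam (d + 1) i)
    {J : Idx (d + 1) i} (hJ : 0 ∈ J.1) (hvJ : 1 ≤ |v J|)
    (hsmall : i * ∑ K with 0 ∉ K.1, |v K| < 1) :
    1 / 2 < ‖projPlus (extPow (uxMat d s) v)‖ := by
  have hclose := abs_extPow_uxMat_apply_sub_le hs v hJ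
  have hproj := abs_le_norm_projPlus (extPow (uxMat d s) v) hJ
  have htri := abs_sub_abs_le_abs_sub (v J) (extPow (uxMat d s) v J)
  rw [abs_sub_comm] at htri
  linarith

lemma mul_sum_abs_lt_one_of_forall_abs_lt (v : Lam (d + 1) i)
    (hsmall : ∀ K : Idx (d + 1) i, 0 ∉ K.1 → |v K| < 1 / (Fintype.card (Idx (d + 1) i) * i + 1)) :
    i * ∑ K with 0 ∉ K.1, |v K| < 1 := by
  set M : ℝ := Fintype.card (Idx (d + 1) i) * i + 1
  have hle : ∑ K with 0 ∉ K.1, |v K| ≤ Fintype.card (Idx (d + 1) i) / M := calc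
    _ ≤ ∑ K with 0 ∉ K.1, 1 / M := sum_le_sum fun K hK => (hsmall K (mem_filter.1 hK).2).le
    _ ≤ ∑ _K : Idx (d + 1) i, 1 / M :=
        sum_le_sum_of_subset_of_nonneg (filter_subset _ _) fun _ _ _ => by positivity
    _ = _ := by rw [sum_const, card_univ, nsmul_eq_mul, mul_one_div]
  calc _ ≤ i * (Fintype.card (Idx (d + 1) i) / M) := by gcongr
    _ < 1 := by
      rw [mul_div_assoc', div_lt_one (by positivity)]
      linarith

lemma volume_Dplus_le_of_forall_abs_lt (v : Lam (d + 1) i) (hv : ‖v‖ = 1)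
    (hsmall : ∀ K : Idx (d + 1) i, 0 ∉ K.1 → |v K| < 1 / (Fintype.card (Idx (d + 1) i) * i + 1))
    (r : ℝ) :
    volume {s | s ∈ Icube d ∧ ‖projPlus (extPow (uxMat d s) v)‖ ≤ r} ≤
      ENNReal.ofReal ((2 * r) ^ i) := by
  set M : ℝ := Fintype.card (Idx (d + 1) i) * i + 1
  have hM : 1 ≤ M := le_add_of_nonneg_left (by positivity)
  obtain ⟨J, hvJ⟩ : ∃ J, 1 ≤ |v J| := by
    by_contra! h
    exact hv.not_lt ((pi_norm_lt_iff one_pos).2 h)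
  have hJ : 0 ∈ J.1 := by
    by_contra h
    have := (hsmall J h).trans_le ((div_le_one (by positivity)).2 hM)
    linarith
  have hsum := mul_sum_abs_lt_one_of_forall_abs_lt v hsmall
  rcases le_or_gt r (1 / 2) with hr2 | hr2
  · have hempty : {s | s ∈ Icube d ∧ ‖projPlus (extPow (uxMat d s) v)‖ ≤ r} = ∅ :=
      Set.eq_empty_of_forall_notMem fun s hs => by
        linarith [half_lt_norm_projPlus hs.1 v hJ hvJ hsum, hs.2]
    simp [hempty]
  calc _ ≤ volume (Icube d) := measure_mono fun s hs => hs.1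
    _ = 1 := by
        rw [Icube, volume_pi_pi]
        norm_num
    _ ≤ _ := by
        rw [← ENNReal.ofReal_one]
        exact ENNReal.ofReal_le_ofReal (one_le_pow₀ (by linarith))

lemma volume_Dplus_le (v : Lam (d + 1) i) (hv : ‖v‖ = 1) {r : ℝ} (hr : 0 < r) :
    volume {s | s ∈ Icube d ∧ ‖projPlus (extPow (uxMat d s) v)‖ ≤ r} ≤
      ENNReal.ofReal ((2 * (Fintype.card (Idx (d + 1) i) * i + 1) * r) ^ i) := by
  set M : ℝ := Fintype.card (Idx (d + 1) i) * i + 1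
  have hM : 1 ≤ M := le_add_of_nonneg_left (by positivity)
  by_cases hbig : ∃ K : Idx (d + 1) i, 0 ∉ K.1 ∧ 1 / M ≤ |v K|
  · obtain ⟨K, hK, hvK⟩ := hbig
    have hvK0 : 0 < |v K| := lt_of_lt_of_le (by positivity) hvK
    calc _ ≤ ENNReal.ofReal (2 * r / |v K|) ^ i :=
          volume_Dplus_le_of_zero_not_mem v hK (abs_pos.1 hvK0) hr.le
      _ ≤ ENNReal.ofReal (2 * M * r) ^ i := by
          gcongr
          rw [div_le_iff₀ hvK0]
          rw [div_le_iff₀ (by positivity)] at hvK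
          nlinarith
      _ = _ := (ENNReal.ofReal_pow (by positivity) _).symm
  push Not at hbig
  refine (volume_Dplus_le_of_forall_abs_lt v hv hbig r).trans
    (ENNReal.ofReal_le_ofReal (pow_le_pow_left₀ (by positivity) ?_ i))
  nlinarith

end Dplus

theorem measure_Dplus_lt_general
    (d : ℕ)
    (i : ℕ) :
    ∃ C : ℝ, 0 < C ∧ ∀ v : Lam (d+1) i, ‖v‖ = 1 → ∀ r : ℝ, 0 < r →
      volume {s : Fin d → ℝ | s ∈ Icube d ∧ ‖projPlus (extPow (uxMat d s) v)‖ ≤ r}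
        < ENNReal.ofReal (C * r ^ i) := by
  set M : ℝ := Fintype.card (Idx (d + 1) i) * i + 1
  refine ⟨(2 * M) ^ i + 1, by positivity, fun v hv r hr => (volume_Dplus_le v hv hr).trans_lt ?_⟩
  rw [ENNReal.ofReal_lt_ofReal_iff (by positivity), mul_pow, add_mul, one_mul]
  exact lt_add_of_pos_right _ (pow_pos hr i)

/-- uniform measure bound |D⁺(v,r)| < C·rⁱ for unit vectors v ∈ Λ^i ℝ^{d+1}. -/
theorem measure_Dplus_lt
    (n d : ℕ) (hn : 2 ≤ n) (hd : 1 ≤ d) (hdn : d < n)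
    (i : ℕ) (hi1 : 1 ≤ i) (hid : i ≤ d) :
    ∃ C : ℝ, 0 < C ∧ ∀ v : Lam (d+1) i, ‖v‖ = 1 → ∀ r : ℝ, 0 < r →
      volume {s : Fin d → ℝ | s ∈ Icube d ∧ ‖projPlus (extPow (uxMat d s) v)‖ ≤ r}
        < ENNReal.ofReal (C * r ^ i) :=
  measure_Dplus_lt_general d i
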